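/- Let θ be an equilibrium of a weighted graph G and let λ be an eigenvalue of the Hessian U''_{θ^σ} of the k-spinning S_k(G) at the lifted point θ^σ, with eigenvector x. For u ∈ VG set X_u = ∑_{j ∈ Z_k} x_{(u,j)}. Then either X ≠ 0 and λ is an eigenvalue of the Hessian U''_θ of G at θ with eigenvector X, or X_u = 0 for all u. -/

import Mathlib

open Real Finset

/-- Adjacency of the `k`-spinning of a weighted graph with oriented weight
function `w` (each edge carries its weight in exactly one direction). -/
def spinAdj {V : Type*} (k : ℕ) (w : V → V → ℕ) (x y : V × ZMod k) : Prop :=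
  (y.2 - x.2).val < w x.1 y.1 ∨ (x.2 - y.2).val < w y.1 x.1 ∨ (x.1 = y.1 ∧ x.2 ≠ y.2)

instance {V : Type*} [DecidableEq V] (k : ℕ) (w : V → V → ℕ) (x y : V × ZMod k) :
    Decidable (spinAdj k w x y) := by unfold spinAdj; infer_instance

/-- Hessian of the Kuramoto potential of the weighted graph `G` at `θ`. -/
noncomputable def hessW {V : Type*} [Fintype V] [DecidableEq V]
    (w : V → V → ℕ) (θ : V → ℝ) : Matrix V V ℝ :=
  fun u v => if u = v then ∑ x, ((w x v + w v x : ℕ) : ℝ) * Real.cos (θ x - θ v)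
             else -(((w u v + w v u : ℕ) : ℝ) * Real.cos (θ u - θ v))

/-- Hessian of the Kuramoto potential of the (unweighted) `k`-spinning `S_k(G)`
at the lifted point `θ^σ`. -/
noncomputable def hessS {V : Type*} [Fintype V] [DecidableEq V]
    (k : ℕ) [NeZero k] (w : V → V → ℕ) (θ : V → ℝ) :
    Matrix (V × ZMod k) (V × ZMod k) ℝ :=
  fun x y => if x = y then ∑ z, (if spinAdj k w x z then Real.cos (θ z.1 - θ x.1) else 0)
             else if spinAdj k w x y then -Real.cos (θ x.1 - θ y.1) else 0

/-!
Sum the eigenvalue equation over each fibre `{u} × ℤ_k`. A vertex `(v, j)` has exactly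
`w u v + w v u` neighbours in the fibre of `u ≠ v` and `k - 1` in its own fibre; the latter
cancel the extra `k - 1` on the diagonal, so every fibre sum of a column of the Hessian of the
spinning is the corresponding entry of the Hessian of `G`. Fibre summation therefore
intertwines the two Hessians and maps eigenvectors to eigenvectors or to `0`.
-/

open Matrix

theorem Matrix.mulVec_sum_fiber {R m n ι : Type*} [NonUnitalNonAssocSemiring R] [Fintype n]
    [Fintype ι] {A : Matrix (m × ι) (n × ι) R} {B : Matrix m n R}
    (hA : ∀ u v j, ∑ i, A (u, i) (v, j) = B u v) (x : n × ι → R) :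
    B *ᵥ (fun v => ∑ j, x (v, j)) = fun u => ∑ i, (A *ᵥ x) (u, i) := by
  funext u
  calc ∑ v, B u v * ∑ j, x (v, j)
      = ∑ v, ∑ j, ∑ i, A (u, i) (v, j) * x (v, j) := by
        simp only [mul_sum, ← sum_mul, hA]
    _ = ∑ i, (A *ᵥ x) (u, i) := by
        simp only [mulVec, dotProduct, Fintype.sum_prod_type]
        exact (sum_congr rfl fun v _ => sum_comm).trans sum_comm

lemma ZMod.card_filter_val_lt {k : ℕ} [NeZero k] {a : ℕ} (ha : a ≤ k) :
    #{c : ZMod k | c.val < a} = a := by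
  obtain ⟨n, rfl⟩ := Nat.exists_eq_succ_of_ne_zero (NeZero.ne k)
  exact Fin.card_filter_val_lt.trans (min_eq_right ha)

lemma ZMod.card_filter_sub_val_lt_or {k : ℕ} [NeZero k] {a b : ℕ} (ha : a ≤ k) (hb : b ≤ k)
    (hab : a = 0 ∨ b = 0) (j : ZMod k) :
    #{i : ZMod k | (j - i).val < a ∨ (i - j).val < b} = a + b := by
  rcases hab with rfl | rfl
  · simpa using (card_equiv (Equiv.subRight j) (by simp)).trans (card_filter_val_lt hb)
  · simpa using (card_equiv (Equiv.subLeft j) (by simp)).trans (card_filter_val_lt ha)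

section Spinning

variable {V : Type*} {w : V → V → ℕ} {k : ℕ}

lemma spinAdj_comm {x y : V × ZMod k} : spinAdj k w x y ↔ spinAdj k w y x := by
  unfold spinAdj; grind

lemma not_spinAdj_self (hdiag : ∀ v, w v v = 0) (x : V × ZMod k) : ¬ spinAdj k w x x := by
  simp [spinAdj, hdiag]

lemma card_spinAdj [DecidableEq V] [NeZero k] (hdiag : ∀ v, w v v = 0)
    (horient : ∀ u v, w u v = 0 ∨ w v u = 0) (hmax : ∀ u v, w u v ≤ k)
    (u v : V) (j : ZMod k) :
    #{i | spinAdj k w (u, i) (v, j)} = w u v + w v u + if u = v then k - 1 else 0 := by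
  by_cases huv : u = v
  · subst huv
    simp only [spinAdj, hdiag, Nat.not_lt_zero, true_and, false_or, if_true, zero_add]
    rw [filter_ne', card_erase_of_mem (mem_univ j), card_univ, ZMod.card]
  · simp only [spinAdj, huv, false_and, or_false, if_false, add_zero]
    exact ZMod.card_filter_sub_val_lt_or (hmax u v) (hmax v u) (horient u v) j

lemma sum_ite_spinAdj [DecidableEq V] [NeZero k] (hdiag : ∀ v, w v v = 0)
    (horient : ∀ u v, w u v = 0 ∨ w v u = 0) (hmax : ∀ u v, w u v ≤ k)
    (u v : V) (j : ZMod k) (c : ℝ) :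
    ∑ i, (if spinAdj k w (u, i) (v, j) then c else 0)
      = (((w u v + w v u : ℕ) : ℝ) + if u = v then (k : ℝ) - 1 else 0) * c := by
  rw [sum_ite, sum_const_zero, add_zero, sum_const, nsmul_eq_mul,
    card_spinAdj hdiag horient hmax, Nat.cast_add, Nat.cast_ite, Nat.cast_pred (NeZero.pos k),
    Nat.cast_zero]

lemma hessS_apply [Fintype V] [DecidableEq V] [NeZero k] (hdiag : ∀ v, w v v = 0) (θ : V → ℝ)
    (p q : V × ZMod k) :
    hessS k w θ p q
      = (if p = q then ∑ z, (if spinAdj k w p z then cos (θ z.1 - θ p.1) else 0) else 0)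
        - if spinAdj k w p q then cos (θ p.1 - θ q.1) else 0 := by
  by_cases hpq : p = q
  · subst hpq
    simp [hessS, not_spinAdj_self hdiag]
  · simp only [hessS, hpq, if_false, zero_sub]
    split_ifs <;> simp

lemma sum_ite_spinAdj_cos_eq_hessW_add [Fintype V] [DecidableEq V] [NeZero k] (hdiag : ∀ v, w v v = 0)
    (horient : ∀ u v, w u v = 0 ∨ w v u = 0) (hmax : ∀ u v, w u v ≤ k) (θ : V → ℝ)
    (u : V) (j : ZMod k) :
    ∑ z, (if spinAdj k w (u, j) z then cos (θ z.1 - θ u) else 0) = hessW w θ u u + (k - 1) := by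
  simp only [Fintype.sum_prod_type, spinAdj_comm (x := (u, j)),
    sum_ite_spinAdj hdiag horient hmax, add_mul, sum_add_distrib, ite_mul, zero_mul,
    sum_ite_eq', mem_univ, if_true, sub_self, cos_zero, mul_one, hessW]

lemma sum_fiber_hessS [Fintype V] [DecidableEq V] [NeZero k] (hdiag : ∀ v, w v v = 0)
    (horient : ∀ u v, w u v = 0 ∨ w v u = 0) (hmax : ∀ u v, w u v ≤ k) (θ : V → ℝ)
    (u v : V) (j : ZMod k) :
    ∑ i, hessS k w θ (u, i) (v, j) = hessW w θ u v := by
  simp only [hessS_apply hdiag, sum_sub_distrib, sum_ite_spinAdj hdiag horient hmax]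
  by_cases huv : u = v
  · subst huv
    simp only [Prod.mk.injEq, true_and, sum_ite_eq', mem_univ, if_true,
      sum_ite_spinAdj_cos_eq_hessW_add hdiag horient hmax, hdiag, sub_self, cos_zero]
    push_cast
    ring
  · simp [huv, hessW]

end Spinning

theorem spinning_eigenvalue_projects_general {V : Type*} [Fintype V] [DecidableEq V]
    (w : V → V → ℕ) (hdiag : ∀ v, w v v = 0)
    (horient : ∀ u v, w u v = 0 ∨ w v u = 0)
    (k : ℕ) [NeZero k] (hmax : ∀ u v, w u v ≤ k)
    (θ : V → ℝ)
    (lam : ℝ) (x : V × ZMod k → ℝ)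
    (heig : (hessS k w θ).mulVec x = lam • x) :
    (fun u => ∑ j : ZMod k, x (u, j)) = 0 ∨
    ((fun u => ∑ j : ZMod k, x (u, j)) ≠ 0 ∧
      (hessW w θ).mulVec (fun u => ∑ j : ZMod k, x (u, j)) =
        lam • fun u => ∑ j : ZMod k, x (u, j)) := by
  refine or_iff_not_imp_left.mpr fun hX => ⟨hX, ?_⟩
  rw [Matrix.mulVec_sum_fiber (sum_fiber_hessS hdiag horient hmax θ) x, heig]
  funext u
  simp [mul_sum]

/-- If `λ` is an eigenvalue of the Hessian of the spinning at the lifted equilibrium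
with eigenvector `x`, then with `X_u = ∑_j x_{(u,j)}` either `X = 0` or `X` is an
eigenvector of the Hessian of `G` at `θ` with the same eigenvalue. -/
theorem spinning_eigenvalue_projects {V : Type*} [Fintype V] [DecidableEq V]
    (w : V → V → ℕ) (hdiag : ∀ v, w v v = 0)
    (horient : ∀ u v, w u v = 0 ∨ w v u = 0)
    (k : ℕ) [NeZero k] (hmax : ∀ u v, w u v ≤ k)
    (θ : V → ℝ)
    (hequil : ∀ v, ∑ u, ((w u v + w v u : ℕ) : ℝ) * Real.sin (θ u - θ v) = 0)
    (lam : ℝ) (x : V × ZMod k → ℝ) (hx : x ≠ 0)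
    (heig : (hessS k w θ).mulVec x = lam • x) :
    (fun u => ∑ j : ZMod k, x (u, j)) = 0 ∨
    ((fun u => ∑ j : ZMod k, x (u, j)) ≠ 0 ∧
      (hessW w θ).mulVec (fun u => ∑ j : ZMod k, x (u, j)) =
        lam • fun u => ∑ j : ZMod k, x (u, j)) :=
  spinning_eigenvalue_projects_general w hdiag horient k hmax θ lam x heig
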